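/- Let u be the right shift on ℓ²(ℤ) and h := (u + u*)/2. Then for every z ∈ ℂ with Im z ≠ 0 and every x ∈ ℤ, the matrix element α_z(x) := ⟨δ_x, (h - z)^{-1} δ_0⟩ satisfies α_z(-x) = α_z(x), and α_{-z}(x) = (-1)^{x+1} α_{z̄}(x)* is consistent with the symmetry relations induced by θ and ξ; moreover for e ∈ (-1,1) the boundary value lim_{ε→0⁺} α_{e-iε}(x) exists and equals -i (e + i√(1-e²))^{|x|} / √(1-e²). -/

import Mathlib

/-!
For `Im z ≠ 0` the equation `w² - 2zw + 1 = 0` has a root `w` in the open unit disc, and the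
vector `x ↦ w^|x|` of `ℓ²(ℤ)` satisfies `(h - z) w^|·| = (w - z) δ₀`. Applying the left inverse
`R z` gives the closed form `α_z(x) = w^|x| / (w - z)`, from which both symmetries are read off
(`-w` is the small root for `-z`, and `w̄` the one for `z̄`). For `z = e - iε` the small root lies
in the upper half plane, and `(w - k)(w - k̄) = 2(z - e)w` with `k = e + i√(1 - e²)` forces
`w → k` as `ε → 0⁺`, so `α_z(x) → k^|x| / (k - e)`.
-/

open Complex

/-- Resolvent matrix element `α_z(x) = ⟨δ_x, (h-z)⁻¹ δ_0⟩` for the discrete Laplacian,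
expressed via an abstract resolvent family `R`. -/
noncomputable def resAlpha (R : ℂ → (lp (fun _ : ℤ => ℂ) 2 →L[ℂ] lp (fun _ : ℤ => ℂ) 2))
    (z : ℂ) (x : ℤ) : ℂ :=
  inner (𝕜 := ℂ) (lp.single 2 x (1 : ℂ)) (R z (lp.single 2 0 (1 : ℂ)))

open Filter Topology

local notation "ℓ²ℤ" => lp (fun _ : ℤ => ℂ) 2

theorem sub_ne_zero_of_root {z w : ℂ} (hw1 : ‖w‖ < 1) (hw : w ^ 2 - 2 * z * w + 1 = 0) :
    w - z ≠ 0 := by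
  intro hwz
  have hw2 : w ^ 2 = 1 := by linear_combination -hw + (2 * w) * hwz
  have : ‖w‖ ^ 2 = 1 := by rw [← norm_pow, hw2, norm_one]
  nlinarith [norm_nonneg w]

theorem im_mul_norm_sq_sub_one_of_root {z w : ℂ} (hw : w ^ 2 - 2 * z * w + 1 = 0) :
    w.im * (‖w‖ ^ 2 - 1) = 2 * z.im * ‖w‖ ^ 2 := by
  have h := congrArg Complex.im (congrArg (· * (starRingEnd ℂ) w) hw)
  simp only [mul_im, sub_im, add_im, pow_two, mul_re, sub_re, add_re, conj_re, conj_im] at h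
  rw [← normSq_eq_norm_sq, normSq_apply]
  norm_num at h
  linear_combination h

theorem exists_root_norm_lt_one {z : ℂ} (hz : z.im ≠ 0) :
    ∃ w : ℂ, ‖w‖ < 1 ∧ w ^ 2 - 2 * z * w + 1 = 0 := by
  obtain ⟨d, hd⟩ := IsAlgClosed.exists_pow_nat_eq (z ^ 2 - 1) two_pos
  have hprod : ‖z + d‖ * ‖z - d‖ = 1 := by
    rw [← norm_mul, show (z + d) * (z - d) = 1 by linear_combination -hd, norm_one]
  rcases lt_trichotomy ‖z + d‖ 1 with hlt | heq | hgt
  · exact ⟨z + d, hlt, by linear_combination hd⟩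
  · have := im_mul_norm_sq_sub_one_of_root (z := z) (w := z + d) (by linear_combination hd)
    rw [heq] at this
    exact absurd (by linarith) hz
  · exact ⟨z - d, by nlinarith [norm_nonneg (z - d)], by linear_combination hd⟩

theorem im_pos_of_root {z w : ℂ} (hz : z.im < 0) (hw1 : ‖w‖ < 1)
    (hw : w ^ 2 - 2 * z * w + 1 = 0) : 0 < w.im := by
  have hw0 : 0 < ‖w‖ := norm_pos_iff.mpr fun h => by simp [h] at hw
  have hrel := im_mul_norm_sq_sub_one_of_root hw
  by_contra! him
  nlinarith [mul_nonneg (neg_nonneg.2 him) (sub_nonneg.2 (pow_le_one₀ hw0.le hw1.le (n := 2))),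
    mul_pos hw0 hw0]

theorem norm_sub_mul_le_of_root {e s : ℝ} (hes : e ^ 2 + s ^ 2 = 1) {z w : ℂ}
    (hw1 : ‖w‖ ≤ 1) (hwim : 0 ≤ w.im) (hw : w ^ 2 - 2 * z * w + 1 = 0) :
    ‖w - (e + I * s)‖ * s ≤ 2 * ‖z - e‖ := by
  have hes' : (e : ℂ) ^ 2 + (s : ℂ) ^ 2 = 1 := by exact_mod_cast hes
  have hfac : (w - (e + I * s)) * (w - (e - I * s)) = 2 * (z - e) * w := by
    linear_combination hw + hes' - (s : ℂ) ^ 2 * I_sq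
  have hfar : s ≤ ‖w - (e - I * s)‖ := by
    have him : (w - (e - I * s)).im = w.im + s := by simp
    linarith [le_abs_self (w - (e - I * s)).im, abs_im_le_norm (w - (e - I * s))]
  calc ‖w - (e + I * s)‖ * s ≤ ‖w - (e + I * s)‖ * ‖w - (e - I * s)‖ := by gcongr
    _ = 2 * ‖z - e‖ * ‖w‖ := by rw [← norm_mul, hfac, norm_mul, norm_mul, Complex.norm_two]
    _ ≤ 2 * ‖z - e‖ := mul_le_of_le_one_right (by positivity) hw1

theorem tendsto_root_of_im_neg {ι : Type*} {l : Filter ι} {z w : ι → ℂ} {e : ℝ}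
    (he : e ∈ Set.Ioo (-1 : ℝ) 1) (hz : Tendsto z l (𝓝 e)) (hzim : ∀ᶠ i in l, (z i).im < 0)
    (hw : ∀ᶠ i in l, ‖w i‖ < 1 ∧ w i ^ 2 - 2 * z i * w i + 1 = 0) :
    Tendsto w l (𝓝 (e + I * (Real.sqrt (1 - e ^ 2) : ℝ))) := by
  set s := Real.sqrt (1 - e ^ 2)
  have hs : 0 < s := Real.sqrt_pos.2 (by nlinarith [he.1, he.2])
  have hes : e ^ 2 + s ^ 2 = 1 := by rw [Real.sq_sqrt (by nlinarith [he.1, he.2])]; ring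
  rw [tendsto_iff_norm_sub_tendsto_zero]
  have hdist : Tendsto (fun i => 2 / s * ‖z i - e‖) l (𝓝 0) := by
    simpa using ((tendsto_iff_norm_sub_tendsto_zero.1 hz).const_mul (2 / s))
  refine squeeze_zero' (.of_forall fun _ => norm_nonneg _) ?_ hdist
  filter_upwards [hzim, hw] with i hzi ⟨hw1, hw⟩
  rw [div_mul_eq_mul_div, le_div_iff₀ hs]
  exact norm_sub_mul_le_of_root hes hw1.le (im_pos_of_root hzi hw1 hw).le hw

theorem memℓp_pow_natAbs {p : ENNReal} (hp : 0 < p.toReal) {w : ℂ} (hw : ‖w‖ < 1) :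
    Memℓp (fun x : ℤ => w ^ x.natAbs) p := by
  have hr : ‖w‖ ^ p.toReal < 1 := Real.rpow_lt_one (norm_nonneg w) hw hp
  have hgeom : Summable fun n : ℕ => (‖w‖ ^ p.toReal) ^ n :=
    summable_geometric_of_lt_one (by positivity) hr
  refine memℓp_gen ((Summable.of_nat_of_neg (f := fun x : ℤ => (‖w‖ ^ p.toReal) ^ x.natAbs)
    (by simpa using hgeom) (by simpa using hgeom)).congr fun x => ?_)
  rw [norm_pow, ← Real.rpow_natCast, ← Real.rpow_natCast, ← Real.rpow_mul (norm_nonneg w),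
    ← Real.rpow_mul (norm_nonneg w), mul_comm]

noncomputable def geomVec (w : ℂ) (hw : ‖w‖ < 1) : ℓ²ℤ :=
  ⟨fun x => w ^ x.natAbs, memℓp_pow_natAbs (by norm_num) hw⟩

theorem pow_natAbs_neighbor_avg {z w : ℂ} (hw : w ^ 2 - 2 * z * w + 1 = 0) (y : ℤ) :
    (w ^ (y - 1).natAbs + w ^ (y + 1).natAbs) / 2 - z * w ^ y.natAbs =
      if y = 0 then w - z else 0 := by
  split_ifs with hy
  · subst hy
    simp
  · obtain ⟨m, hm⟩ : ∃ m : ℕ, y.natAbs = m + 1 := ⟨y.natAbs - 1, by omega⟩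
    obtain ⟨h₁, h₂⟩ | ⟨h₁, h₂⟩ : (y - 1).natAbs = m ∧ (y + 1).natAbs = m + 2 ∨
        (y - 1).natAbs = m + 2 ∧ (y + 1).natAbs = m := by omega
    all_goals rw [h₁, h₂, hm]; linear_combination w ^ m / 2 * hw

def IsDiscreteLaplacian (h : ℓ²ℤ →L[ℂ] ℓ²ℤ) : Prop :=
  ∀ (f : ℓ²ℤ) (x : ℤ), (h f : ∀ _ : ℤ, ℂ) x = (f (x - 1) + f (x + 1)) / 2

theorem IsDiscreteLaplacian.sub_smul_geomVec {h : ℓ²ℤ →L[ℂ] ℓ²ℤ} (hh : IsDiscreteLaplacian h)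
    {z w : ℂ} (hw1 : ‖w‖ < 1) (hw : w ^ 2 - 2 * z * w + 1 = 0) :
    (h - z • ContinuousLinearMap.id ℂ ℓ²ℤ) (geomVec w hw1) = (w - z) • lp.single 2 0 1 := by
  ext y
  simp only [FunLike.coe_sub, FunLike.coe_smul, Pi.sub_apply,
    Pi.smul_apply, ContinuousLinearMap.coe_id', id, lp.coeFn_sub, lp.coeFn_smul, hh _ y]
  simpa [geomVec, lp.single_apply, Pi.single_apply] using pow_natAbs_neighbor_avg hw y

theorem IsDiscreteLaplacian.resAlpha_eq {h : ℓ²ℤ →L[ℂ] ℓ²ℤ} (hh : IsDiscreteLaplacian h)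
    {R : ℂ → (ℓ²ℤ →L[ℂ] ℓ²ℤ)} {z : ℂ}
    (hR : R z ∘L (h - z • ContinuousLinearMap.id ℂ _) = ContinuousLinearMap.id ℂ _)
    {w : ℂ} (hw1 : ‖w‖ < 1) (hw : w ^ 2 - 2 * z * w + 1 = 0) (x : ℤ) :
    resAlpha R z x = w ^ x.natAbs / (w - z) := by
  have hg : (w - z) • R z (lp.single 2 0 1) = geomVec w hw1 := by
    rw [← map_smul, ← hh.sub_smul_geomVec hw1 hw, ← ContinuousLinearMap.comp_apply, hR,
      ContinuousLinearMap.id_apply]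
  have hx := congrArg (fun f : ℓ²ℤ => inner ℂ (lp.single 2 x (1 : ℂ)) f) hg
  simp only [inner_smul_right, lp.inner_single_left] at hx
  rw [eq_div_iff (sub_ne_zero_of_root hw1 hw), resAlpha, lp.inner_single_left, mul_comm, hx]
  simp [geomVec]

theorem neg_one_zpow_eq_pow_natAbs {K : Type*} [DivisionRing K] (x : ℤ) :
    (-1 : K) ^ x = (-1) ^ x.natAbs := by
  obtain ⟨n, rfl | rfl⟩ := Int.eq_nat_or_neg x
  · simp
  · rw [zpow_neg, zpow_natCast, ← inv_pow, inv_neg_one, Int.natAbs_neg, Int.natAbs_natCast]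

section Resolvent

variable {h : ℓ²ℤ →L[ℂ] ℓ²ℤ} {R : ℂ → (ℓ²ℤ →L[ℂ] ℓ²ℤ)}

theorem IsDiscreteLaplacian.resAlpha_neg_right (hh : IsDiscreteLaplacian h) {z : ℂ}
    (hR : R z ∘L (h - z • ContinuousLinearMap.id ℂ _) = ContinuousLinearMap.id ℂ _)
    (hz : z.im ≠ 0) (x : ℤ) : resAlpha R z (-x) = resAlpha R z x := by
  obtain ⟨w, hw1, hw⟩ := exists_root_norm_lt_one hz
  rw [hh.resAlpha_eq hR hw1 hw, hh.resAlpha_eq hR hw1 hw, Int.natAbs_neg]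

theorem IsDiscreteLaplacian.resAlpha_neg (hh : IsDiscreteLaplacian h)
    (hR : ∀ z : ℂ, z.im ≠ 0 →
      R z ∘L (h - z • ContinuousLinearMap.id ℂ _) = ContinuousLinearMap.id ℂ _)
    {z : ℂ} (hz : z.im ≠ 0) (x : ℤ) :
    resAlpha R (-z) x = (-1) ^ (x + 1) * starRingEnd ℂ (resAlpha R (starRingEnd ℂ z) x) := by
  obtain ⟨w, hw1, hw⟩ := exists_root_norm_lt_one hz
  have hw_neg : (-w) ^ 2 - 2 * (-z) * (-w) + 1 = 0 := by linear_combination hw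
  have hw_conj : (starRingEnd ℂ w) ^ 2 - 2 * starRingEnd ℂ z * starRingEnd ℂ w + 1 = 0 := by
    simpa [map_ofNat] using congrArg (starRingEnd ℂ) hw
  rw [hh.resAlpha_eq (hR _ (by simpa using hz)) (by simpa using hw1) hw_neg,
    hh.resAlpha_eq (hR _ (by simpa using hz)) (by simpa using hw1) hw_conj,
    zpow_add₀ (by norm_num), neg_one_zpow_eq_pow_natAbs]
  simp only [map_div₀, map_pow, map_sub, conj_conj]
  rw [neg_pow, show -w - -z = -(w - z) by ring, div_neg]
  ring

theorem IsDiscreteLaplacian.tendsto_resAlpha_sub_mul_I (hh : IsDiscreteLaplacian h)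
    (hR : ∀ z : ℂ, z.im ≠ 0 →
      R z ∘L (h - z • ContinuousLinearMap.id ℂ _) = ContinuousLinearMap.id ℂ _)
    {e : ℝ} (he : e ∈ Set.Ioo (-1 : ℝ) 1) (x : ℤ) :
    Tendsto (fun ε : ℝ => resAlpha R ((e : ℂ) - ε * I) x) (𝓝[>] 0)
      (𝓝 (-I * ((e : ℂ) + I * (Real.sqrt (1 - e ^ 2) : ℝ)) ^ x.natAbs /
        (Real.sqrt (1 - e ^ 2) : ℝ))) := by
  choose! w hw using fun (z : ℂ) (hz : z.im ≠ 0) => exists_root_norm_lt_one hz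
  set s : ℝ := Real.sqrt (1 - e ^ 2)
  set k : ℂ := e + I * s
  have hs : (s : ℂ) ≠ 0 := ofReal_ne_zero.2 (Real.sqrt_pos.2 (by nlinarith [he.1, he.2])).ne'
  have hzim : ∀ ε ∈ Set.Ioi (0 : ℝ), ((e : ℂ) - ε * I).im ≠ 0 := fun ε hε => by
    simpa using (ne_of_gt hε)
  have hz : Tendsto (fun ε : ℝ => (e : ℂ) - ε * I) (𝓝[>] 0) (𝓝 e) :=
    tendsto_nhdsWithin_of_tendsto_nhds <|
      (by fun_prop : Continuous fun ε : ℝ => (e : ℂ) - ε * I).tendsto' 0 e (by simp)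
  have hwlim : Tendsto (fun ε : ℝ => w ((e : ℂ) - ε * I)) (𝓝[>] 0) (𝓝 k) :=
    tendsto_root_of_im_neg he hz (eventually_nhdsWithin_of_forall fun ε hε => by simpa using hε)
      (eventually_nhdsWithin_of_forall fun ε hε => hw _ (hzim ε hε))
  have hlim := (hwlim.pow x.natAbs).div (hwlim.sub hz) (by simpa [k] using hs)
  have hval : k ^ x.natAbs / (k - e) = -I * k ^ x.natAbs / s := by
    rw [show k - e = I * s by ring, div_eq_div_iff (mul_ne_zero I_ne_zero hs) hs]
    linear_combination k ^ x.natAbs * s * I_sq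
  rw [hval] at hlim
  refine hlim.congr' (eventually_nhdsWithin_of_forall fun ε hε => ?_)
  exact (hh.resAlpha_eq (hR _ (hzim ε hε)) (hw _ (hzim ε hε)).1 (hw _ (hzim ε hε)).2 x).symm

end Resolvent

theorem resolvent_kernel_symmetries_and_boundary_value
    (h : lp (fun _ : ℤ => ℂ) 2 →L[ℂ] lp (fun _ : ℤ => ℂ) 2)
    (hh : ∀ (f : lp (fun _ : ℤ => ℂ) 2) (x : ℤ),
      (h f : ∀ _ : ℤ, ℂ) x = (f (x - 1) + f (x + 1)) / 2)
    (R : ℂ → (lp (fun _ : ℤ => ℂ) 2 →L[ℂ] lp (fun _ : ℤ => ℂ) 2))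
    (hR : ∀ z : ℂ, z.im ≠ 0 →
      (h - z • ContinuousLinearMap.id ℂ _) ∘L R z = ContinuousLinearMap.id ℂ _ ∧
      R z ∘L (h - z • ContinuousLinearMap.id ℂ _) = ContinuousLinearMap.id ℂ _) :
    (∀ (z : ℂ), z.im ≠ 0 → ∀ x : ℤ, resAlpha R z (-x) = resAlpha R z x) ∧
    (∀ (z : ℂ), z.im ≠ 0 → ∀ x : ℤ,
      resAlpha R (-z) x = (-1) ^ (x + 1) * (starRingEnd ℂ) (resAlpha R (starRingEnd ℂ z) x)) ∧
    (∀ e : ℝ, e ∈ Set.Ioo (-1 : ℝ) 1 → ∀ x : ℤ,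
      Filter.Tendsto (fun ε : ℝ => resAlpha R ((e : ℂ) - ε * Complex.I) x)
        (nhdsWithin 0 (Set.Ioi 0))
        (nhds (-Complex.I * ((e : ℂ) + Complex.I * (Real.sqrt (1 - e ^ 2) : ℝ)) ^ x.natAbs /
          (Real.sqrt (1 - e ^ 2) : ℝ)))) := by
  have hh' : IsDiscreteLaplacian h := hh
  have hR' : ∀ z : ℂ, z.im ≠ 0 →
      R z ∘L (h - z • ContinuousLinearMap.id ℂ _) = ContinuousLinearMap.id ℂ _ :=
    fun z hz => (hR z hz).2
  exact ⟨fun z hz x => hh'.resAlpha_neg_right (hR' z hz) hz x,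
    fun z hz x => hh'.resAlpha_neg hR' hz x,
    fun e he x => hh'.tendsto_resAlpha_sub_mul_I hR' he x⟩
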